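/- arXiv:2103.16723 — 2 statements merged into one kernel-verified Lean document; each statement's English description precedes it below -/
import Mathlib

section
/- Let m ≥ 2 be even. Then for every g ≥ m there exists a numerical semigroup S with concentration 2, multiplicity m, and genus g. -/
open Set

/-- A numerical semigroup: contains 0, closed under addition, finite complement. -/
def IsNumSgp (S : Set ℕ) : Prop :=
  0 ∈ S ∧ (∀ a ∈ S, ∀ b ∈ S, a + b ∈ S) ∧ (Sᶜ : Set ℕ).Finite

/-- The multiplicity: least positive element. -/
noncomputable def mult (S : Set ℕ) : ℕ := sInf {n | n ∈ S ∧ n ≠ 0}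

/-- next_S(s) = min { x ∈ S | s < x }. -/
noncomputable def nextS (S : Set ℕ) (s : ℕ) : ℕ := sInf {x | x ∈ S ∧ s < x}

/-- The concentration C(S) = max { next_S(s) - s | s ∈ S \ {0} }. -/
noncomputable def conc (S : Set ℕ) : ℕ :=
  sSup {d | ∃ s ∈ S, s ≠ 0 ∧ d = nextS S s - s}

/-- The Frobenius number: largest gap. -/
noncomputable def frob (S : Set ℕ) : ℕ := sSup (Sᶜ : Set ℕ)

/-- The genus: number of gaps. -/
noncomputable def genus (S : Set ℕ) : ℕ := (Sᶜ : Set ℕ).ncard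

/-- x is a minimal generator of S. -/
def IsMinGen (S : Set ℕ) (x : ℕ) : Prop :=
  x ∈ S ∧ x ≠ 0 ∧ ¬∃ a ∈ S, ∃ b ∈ S, a ≠ 0 ∧ b ≠ 0 ∧ a + b = x

/-- The embedding dimension: number of minimal generators. -/
noncomputable def edim (S : Set ℕ) : ℕ := {x | IsMinGen S x}.ncard

/-- n(S): the number of elements of S smaller than the Frobenius number. -/
noncomputable def nS (S : Set ℕ) : ℕ := {s | s ∈ S ∧ s < frob S}.ncard

/-- The half-line Δ(m) = {0} ∪ {m, m+1, ...}. -/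
def Delta (m : ℕ) : Set ℕ := {0} ∪ {n | m ≤ n}

def IsHalfLine (S : Set ℕ) : Prop := ∃ m, S = Delta m

/-- An irreducible numerical semigroup. -/
def Irred (S : Set ℕ) : Prop :=
  ¬∃ T₁ T₂ : Set ℕ, IsNumSgp T₁ ∧ IsNumSgp T₂ ∧ S ⊂ T₁ ∧ S ⊂ T₂ ∧ S = T₁ ∩ T₂

/-!
Take `S = {0} ∪ {m, m + 2, m + 4, …} ∪ {m + 2r, m + 2r + 1, …}` with `r = g - m + 1 ≥ 1`.
It is closed under addition, and since `m` is even it contains `m`, so its multiplicity is `m`.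
Consecutive elements differ by at most `2`, with the difference `2` attained right after `m`.
Its gaps are the `m - 1` numbers below `m` and the `r` odd numbers between `m` and `m + 2r`,
so its genus is `m - 1 + r = g`.
-/

lemma nextS_eq_of_isLeast {S : Set ℕ} {s x : ℕ} (h : IsLeast {y | y ∈ S ∧ s < y} x) :
    nextS S s = x :=
  h.csInf_eq

lemma nextS_le {S : Set ℕ} {s x : ℕ} (hx : x ∈ S) (hsx : s < x) : nextS S s ≤ x :=
  Nat.sInf_le ⟨hx, hsx⟩

lemma mult_eq_of_isLeast {S : Set ℕ} {m : ℕ} (h : IsLeast {n | n ∈ S ∧ n ≠ 0} m) :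
    mult S = m :=
  h.csInf_eq

lemma conc_eq_of_forall_le {S : Set ℕ} {d s₀ : ℕ} (hs₀ : s₀ ∈ S) (hs₀0 : s₀ ≠ 0)
    (hd : nextS S s₀ - s₀ = d) (hle : ∀ s ∈ S, s ≠ 0 → nextS S s - s ≤ d) : conc S = d := by
  have hmax : IsGreatest {d | ∃ s ∈ S, s ≠ 0 ∧ d = nextS S s - s} d := by
    refine ⟨⟨s₀, hs₀, hs₀0, hd.symm⟩, ?_⟩
    rintro _ ⟨s, hs, hs0, rfl⟩
    exact hle s hs hs0
  exact hmax.csSup_eq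

def evenThenAll (m r : ℕ) : Set ℕ := {n | n = 0 ∨ (m ≤ n ∧ Even n) ∨ m + 2 * r ≤ n}

namespace evenThenAll

variable {m r : ℕ}

lemma mem_iff {n : ℕ} : n ∈ evenThenAll m r ↔ n = 0 ∨ (m ≤ n ∧ n % 2 = 0) ∨ m + 2 * r ≤ n := by
  rw [evenThenAll, mem_ofPred_eq, Nat.even_iff]

lemma isNumSgp : IsNumSgp (evenThenAll m r) := by
  refine ⟨mem_iff.2 (Or.inl rfl), fun a ha b hb => ?_, (finite_Iio (m + 2 * r)).subset ?_⟩
  · rw [mem_iff] at ha hb ⊢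
    omega
  · intro n hn
    rw [mem_compl_iff, mem_iff] at hn
    exact mem_Iio.2 (by omega)

lemma nextS_le_add_two {s : ℕ} (hs : s ∈ evenThenAll m r) (hs0 : s ≠ 0) :
    nextS (evenThenAll m r) s ≤ s + 2 := by
  rw [mem_iff] at hs
  rcases hs with h | h | h
  · exact absurd h hs0
  · exact nextS_le (mem_iff.2 (by omega)) (by omega)
  · exact (nextS_le (x := s + 1) (mem_iff.2 (by omega)) (by omega)).trans (by omega)

variable (hev : Even m)
include hev

lemma self_mem : m ∈ evenThenAll m r :=
  mem_iff.2 (Or.inr (Or.inl ⟨le_rfl, Nat.even_iff.1 hev⟩))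

lemma mult_eq (hm : m ≠ 0) : mult (evenThenAll m r) = m := by
  refine mult_eq_of_isLeast ⟨⟨self_mem hev, hm⟩, fun n ⟨hn, hn0⟩ => ?_⟩
  rw [mem_iff] at hn
  omega

lemma nextS_self (hr : r ≠ 0) : nextS (evenThenAll m r) m = m + 2 := by
  have := Nat.even_iff.1 hev
  refine nextS_eq_of_isLeast ⟨⟨mem_iff.2 (by omega), by omega⟩, fun y ⟨hy, hmy⟩ => ?_⟩
  rw [mem_iff] at hy
  omega

lemma conc_eq (hm : m ≠ 0) (hr : r ≠ 0) : conc (evenThenAll m r) = 2 :=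
  conc_eq_of_forall_le (self_mem hev) hm (by rw [nextS_self hev hr]; omega)
    fun s hs hs0 => by have := nextS_le_add_two hs hs0; omega

lemma compl_eq : (evenThenAll m r)ᶜ = Ioo 0 m ∪ (fun i => m + 1 + 2 * i) '' Iio r := by
  have := Nat.even_iff.1 hev
  ext n
  simp only [mem_compl_iff, mem_iff, mem_union, mem_Ioo, mem_image, mem_Iio]
  constructor
  · intro hn
    by_cases hnm : n < m
    · exact Or.inl (by omega)
    · exact Or.inr ⟨(n - m - 1) / 2, by omega, by omega⟩
  · rintro (hn | ⟨i, hi, rfl⟩) <;> omega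

lemma genus_eq : genus (evenThenAll m r) = m - 1 + r := by
  have hdisj : Disjoint (Ioo 0 m) ((fun i => m + 1 + 2 * i) '' Iio r) := by
    rw [disjoint_left]
    rintro _ hn ⟨i, -, rfl⟩
    exact absurd hn.2 (by simp only; omega)
  have hinj : Function.Injective fun i => m + 1 + 2 * i := fun a b h => by
    simp only at h
    omega
  rw [genus, compl_eq hev, ncard_union_eq hdisj (finite_Ioo 0 m) ((finite_Iio r).image _),
    ncard_image_of_injective _ hinj, ncard_Ioo_nat, ncard_Iio_nat]
  omega

end evenThenAll

theorem stmt12 (m : ℕ) (hm : 2 ≤ m) (hev : Even m) :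
    ∀ g : ℕ, m ≤ g → ∃ S : Set ℕ, IsNumSgp S ∧ conc S = 2 ∧ mult S = m ∧
      genus S = g := by
  intro g hg
  refine ⟨evenThenAll m (g - m + 1), evenThenAll.isNumSgp, evenThenAll.conc_eq hev (by omega)
    (by omega), evenThenAll.mult_eq hev (by omega), ?_⟩
  rw [evenThenAll.genus_eq hev]
  omega
end

section
/- If S is a numerical semigroup with concentration 2, multiplicity m, and Frobenius number F(S) > 2m, then n(S) ≥ m/2 + 2, where n(S) is the number of elements of S strictly smaller than F(S). -/
open Set

/-!
Concentration at most 2 means that from the multiplicity `m` on, `S` never skips two consecutive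
integers. So each of the `⌈m/2⌉` disjoint pairs `{m + 1 + 2i, m + 2 + 2i}`, `i < ⌈m/2⌉`, contains an
element of `S`; these pairs end at most at `2m + 1 ≤ F(S)`, and `F(S) ∉ S`, so together with `0`
and `m` they give `⌈m/2⌉ + 2 ≥ m/2 + 2` elements of `S` below `F(S)`.
-/

namespace IsNumSgp

variable {S : Set ℕ}

theorem mem_of_frob_lt (hS : IsNumSgp S) {x : ℕ} (hx : frob S < x) : x ∈ S := by
  by_contra hxS
  exact (le_csSup hS.2.2.bddAbove hxS).not_gt hx

theorem frob_notMem (hS : IsNumSgp S) (hF : 0 < frob S) : frob S ∉ S := by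
  have hgap : (Sᶜ : Set ℕ).Nonempty := by
    by_contra h
    rw [Set.not_nonempty_iff_eq_empty] at h
    simp [frob, h] at hF
  exact Nat.sSup_mem hgap hS.2.2.bddAbove

theorem exists_mem_gt (hS : IsNumSgp S) (s : ℕ) : ∃ x ∈ S, s < x :=
  ⟨s + frob S + 1, hS.mem_of_frob_lt (by omega), by omega⟩

theorem mult_mem_and_ne_zero (hS : IsNumSgp S) : mult S ∈ S ∧ mult S ≠ 0 := by
  obtain ⟨x, hx, hx0⟩ := hS.exists_mem_gt 0
  exact Nat.sInf_mem (s := {n | n ∈ S ∧ n ≠ 0}) ⟨x, hx, hx0.ne'⟩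

theorem nextS_mem_and_lt (hS : IsNumSgp S) (s : ℕ) : nextS S s ∈ S ∧ s < nextS S s :=
  Nat.sInf_mem (hS.exists_mem_gt s)

theorem nextS_le_add_conc (hS : IsNumSgp S) {s : ℕ} (hs : s ∈ S) (hs0 : s ≠ 0) :
    nextS S s ≤ s + conc S := by
  have hbdd : BddAbove {d | ∃ t ∈ S, t ≠ 0 ∧ d = nextS S t - t} := by
    refine ⟨frob S + 1, ?_⟩
    rintro d ⟨t, -, -, rfl⟩
    have : nextS S t ≤ max t (frob S) + 1 :=
      Nat.sInf_le ⟨hS.mem_of_frob_lt (by omega), by omega⟩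
    omega
  have := le_csSup hbdd ⟨s, hs, hs0, rfl⟩
  rw [← conc] at this
  omega

/-- If the element found in the window at `x` is `x` itself, then `next_S(x) ≤ x + C(S)` lies in
the window at `x + 1`. -/
theorem exists_mem_Ico_of_conc_le (hS : IsNumSgp S) {c : ℕ} (hc : conc S ≤ c) {x : ℕ}
    (hx : mult S ≤ x) : ∃ y ∈ S, x ≤ y ∧ y < x + c := by
  obtain ⟨hmS, hm0⟩ := hS.mult_mem_and_ne_zero
  induction x, hx using Nat.le_induction with
  | base =>
    have := hS.nextS_mem_and_lt (mult S)
    have := hS.nextS_le_add_conc hmS hm0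
    exact ⟨mult S, hmS, le_rfl, by omega⟩
  | succ x hx ih =>
    obtain ⟨y, hy, hxy, hyx⟩ := ih
    rcases hxy.lt_or_eq with hxy | hxy
    · exact ⟨y, hy, hxy, by omega⟩
    · obtain ⟨hnext, hlt⟩ := hS.nextS_mem_and_lt y
      have := hS.nextS_le_add_conc hy (by omega)
      exact ⟨nextS S y, hnext, by omega, by omega⟩

end IsNumSgp

theorem le_ncard_inter_Ico_of_forall_nonempty {T : Set ℕ} (a c k : ℕ)
    (h : ∀ i < k, (T ∩ Set.Ico (a + c * i) (a + c * (i + 1))).Nonempty) :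
    k ≤ (T ∩ Set.Ico a (a + c * k)).ncard := by
  induction k with
  | zero => simp
  | succ k ih =>
    have hsplit : T ∩ Set.Ico a (a + c * (k + 1)) =
        T ∩ Set.Ico a (a + c * k) ∪ T ∩ Set.Ico (a + c * k) (a + c * (k + 1)) := by
      rw [← Set.inter_union_distrib_left, Set.Ico_union_Ico_eq_Ico (by omega)
        (by gcongr; omega)]
    have hdisj : Disjoint (T ∩ Set.Ico a (a + c * k))
        (T ∩ Set.Ico (a + c * k) (a + c * (k + 1))) :=
      Set.Ico_disjoint_Ico_same.mono Set.inter_subset_right Set.inter_subset_right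
    rw [hsplit, Set.ncard_union_eq hdisj ((Set.finite_Ico _ _).inter_of_right T)
      ((Set.finite_Ico _ _).inter_of_right T)]
    have hlast := (Set.ncard_pos ((Set.finite_Ico _ _).inter_of_right T)).2 (h k k.lt_succ_self)
    have := ih fun i hi => h i (by omega)
    omega

theorem IsNumSgp.mult_add_one_div_two_add_two_le_nS {S : Set ℕ} (hS : IsNumSgp S)
    (hC : conc S ≤ 2) (hF : 2 * mult S < frob S) : (mult S + 1) / 2 + 2 ≤ nS S := by
  set m := mult S
  set k := (m + 1) / 2
  obtain ⟨hmS, hm0⟩ := hS.mult_mem_and_ne_zero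
  have hFS := hS.frob_notMem (by omega)
  have hpairs : k ≤ (S ∩ Set.Ico (m + 1) (m + 1 + 2 * k)).ncard := by
    refine le_ncard_inter_Ico_of_forall_nonempty _ _ _ fun i _ => ?_
    obtain ⟨y, hy, hy1, hy2⟩ := hS.exists_mem_Ico_of_conc_le hC (x := m + 1 + 2 * i) (by omega)
    exact ⟨y, hy, hy1, by omega⟩
  have hsub : insert 0 (insert m (S ∩ Set.Ico (m + 1) (m + 1 + 2 * k))) ⊆
      {s | s ∈ S ∧ s < frob S} := by
    rintro x (rfl | rfl | ⟨hx, hx1, hx2⟩)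
    · exact ⟨hS.1, by omega⟩
    · exact ⟨hmS, by omega⟩
    · exact ⟨hx, lt_of_le_of_ne (by omega) fun h => hFS (h ▸ hx)⟩
  have hfin : (S ∩ Set.Ico (m + 1) (m + 1 + 2 * k)).Finite :=
    (Set.finite_Ico _ _).inter_of_right S
  have hcard := Set.ncard_le_ncard hsub ((Set.finite_Iio (frob S)).subset fun x hx => hx.2)
  have h0 : 0 ∉ insert m (S ∩ Set.Ico (m + 1) (m + 1 + 2 * k)) := by
    simp only [Set.mem_insert_iff, Set.mem_inter_iff, Set.mem_Ico]
    omega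
  have hm : m ∉ S ∩ Set.Ico (m + 1) (m + 1 + 2 * k) := by simp
  rw [Set.ncard_insert_of_notMem h0 (hfin.insert m), Set.ncard_insert_of_notMem hm hfin] at hcard
  unfold nS
  omega

theorem stmt13 (S : Set ℕ) (m : ℕ) (hS : IsNumSgp S) (hC : conc S = 2)
    (hm : mult S = m) (hF : 2 * m < frob S) :
    (m : ℚ) / 2 + 2 ≤ (nS S : ℚ) := by
  subst hm
  have hcount := hS.mult_add_one_div_two_add_two_le_nS hC.le hF
  have hhalf : mult S ≤ 2 * ((mult S + 1) / 2) := by omega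
  have : (mult S : ℚ) + 4 ≤ 2 * nS S := by exact_mod_cast (by omega : mult S + 4 ≤ 2 * nS S)
  linarith
end
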